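/- Define T : ℝ → ℝ by T(Z) = −(Z/2 + π/2) for Z ≤ −π, T(Z) = (1/2)·sin Z for −π ≤ Z ≤ π, and T(Z) = −(Z/2 − π/2) for Z ≥ π; define V : ℝ → ℝ by V(Z) = −cos Z for |Z| ≤ π and V(Z) = 1 for |Z| ≥ π. For β ∈ ℝ define φ_β by φ_β(Z) = ((1 − cos Z)/(1 + cos Z))^β · sin² Z for Z ∈ (−π,π)\{0}, φ_β(Z) = (−(Z+π))^{2(1−β)} for Z < −π, and φ_β(Z) = (Z−π)^{2(1−β)} for Z > π (real powers of positive bases). Then for every β ∈ ℝ and every Z in (−∞,−π) ∪ (−π,0) ∪ (0,π) ∪ (π,∞), φ_β is differentiable at Z and V(Z)·φ_β(Z) + T(Z)·φ_β′(Z) = β·φ_β(Z). -/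

import Mathlib

open Real Set

/-- The transport coefficient `T(Z) = −Z/2 + ∫₀^Z G₁`. -/
noncomputable def Tc (Z : ℝ) : ℝ :=
  if Z ≤ -π then -(Z / 2 + π / 2)
  else if Z ≤ π then Real.sin Z / 2
  else -(Z / 2 - π / 2)

/-- The potential `V(Z) = 1 − 2G₁(Z)`. -/
noncomputable def Vc (Z : ℝ) : ℝ := if |Z| ≤ π then -Real.cos Z else 1

/-- The eigenfunctions `φ_β` of the operator `u ↦ T ∂_Z u + V u`. -/
noncomputable def phi (β Z : ℝ) : ℝ :=
  if Z < -π then (-(Z + π)) ^ (2 * (1 - β))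
  else if π < Z then (Z - π) ^ (2 * (1 - β))
  else ((1 - Real.cos Z) / (1 + Real.cos Z)) ^ β * Real.sin Z ^ 2

/- On `(-π, π)` one has `φ_β = tan^{2β}(Z/2) sin² Z`, whose logarithmic derivative is
`2(β + cos Z) / sin Z`; multiplied by `T = sin Z / 2` this gives `β − V`. Outside `[-π, π]`,
`φ_β = |Z ∓ π|^{2(1-β)}` and `T = -(Z ∓ π)/2`, so `T φ_β' = -(1-β) φ_β = (β − V) φ_β`. -/

lemma differentiableAt_and_eq_of_eventuallyEq {u f : ℝ → ℝ} {f' Z v t β : ℝ}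
    (hf : HasDerivAt f f' Z) (hu : u =ᶠ[nhds Z] f) (h : v * f Z + t * f' = β * f Z) :
    DifferentiableAt ℝ u Z ∧ v * u Z + t * deriv u Z = β * u Z := by
  have hu' := hf.congr_of_eventuallyEq hu
  exact ⟨hu'.differentiableAt, by rwa [hu'.deriv, hu.eq_of_nhds]⟩

lemma hasDerivAt_rpow_div_mul_sin_sq {β Z : ℝ} (hs : sin Z ≠ 0) :
    HasDerivAt (fun z => ((1 - cos z) / (1 + cos z)) ^ β * sin z ^ 2)
      (2 * sin Z * (β + cos Z) * ((1 - cos Z) / (1 + cos Z)) ^ β) Z := by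
  have hpyth := sin_sq_add_cos_sq Z
  have hs2 : 0 < sin Z ^ 2 := by positivity
  have hplus : 0 < 1 + cos Z := by nlinarith
  have hminus : 0 < 1 - cos Z := by nlinarith
  have hquot : (1 - cos Z) / (1 + cos Z) ≠ 0 := (div_pos hminus hplus).ne'
  have hnum : HasDerivAt (fun z => 1 - cos z) (sin Z) Z := by
    simpa using (hasDerivAt_cos Z).const_sub 1
  have hden : HasDerivAt (fun z => 1 + cos z) (-sin Z) Z := (hasDerivAt_cos Z).const_add 1
  have hq := hnum.fun_div hden hplus.ne'
  refine ((hq.rpow_const (p := β) (Or.inl hquot)).mul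
    ((hasDerivAt_sin Z).fun_pow 2)).congr_deriv ?_
  push_cast
  rw [rpow_sub_one hquot]
  field_simp
  linear_combination 2 * β * hpyth

lemma phi_eventuallyEq_of_lt_neg_pi {β Z : ℝ} (hZ : Z < -π) :
    phi β =ᶠ[nhds Z] fun z => (-(z + π)) ^ (2 * (1 - β)) := by
  filter_upwards [Iio_mem_nhds hZ] with z (hz : z < -π)
  rw [phi, if_pos hz]

lemma phi_eventuallyEq_of_pi_lt {β Z : ℝ} (hZ : π < Z) :
    phi β =ᶠ[nhds Z] fun z => (z - π) ^ (2 * (1 - β)) := by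
  filter_upwards [Ioi_mem_nhds hZ] with z (hz : π < z)
  rw [phi, if_neg (by linarith [pi_pos]), if_pos hz]

lemma phi_eventuallyEq_of_mem_Ioo {β Z : ℝ} (hZ : Z ∈ Ioo (-π) π) :
    phi β =ᶠ[nhds Z] fun z => ((1 - cos z) / (1 + cos z)) ^ β * sin z ^ 2 := by
  filter_upwards [Ioo_mem_nhds hZ.1 hZ.2] with z hz
  rw [phi, if_neg (not_lt.mpr hz.1.le), if_neg (not_lt.mpr hz.2.le)]

lemma eigen_of_lt_neg_pi {β Z : ℝ} (hZ : Z < -π) :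
    DifferentiableAt ℝ (phi β) Z ∧
    Vc Z * phi β Z + Tc Z * deriv (phi β) Z = β * phi β Z := by
  have hx : -(Z + π) ≠ 0 := by linarith
  have hV : Vc Z = 1 := if_neg (by linarith [neg_le_abs Z])
  have hT : Tc Z = -(Z + π) / 2 := by rw [Tc, if_pos hZ.le]; ring
  rw [hV, hT]
  have hd : HasDerivAt (fun z => -(z + π)) (-1) Z := ((hasDerivAt_id' Z).add_const π).neg
  refine differentiableAt_and_eq_of_eventuallyEq (hd.rpow_const (Or.inl hx))
    (phi_eventuallyEq_of_lt_neg_pi hZ) ?_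
  rw [rpow_sub_one hx]
  set x := -(Z + π)
  field_simp
  ring

lemma eigen_of_pi_lt {β Z : ℝ} (hZ : π < Z) :
    DifferentiableAt ℝ (phi β) Z ∧
    Vc Z * phi β Z + Tc Z * deriv (phi β) Z = β * phi β Z := by
  have hx : Z - π ≠ 0 := by linarith
  have hV : Vc Z = 1 := if_neg (by linarith [le_abs_self Z])
  have hT : Tc Z = -(Z - π) / 2 := by
    rw [Tc, if_neg (by linarith [pi_pos]), if_neg (not_le.mpr hZ)]; ring
  rw [hV, hT]
  refine differentiableAt_and_eq_of_eventuallyEq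
    (((hasDerivAt_id' Z).sub_const π).rpow_const (Or.inl hx))
    (phi_eventuallyEq_of_pi_lt hZ) ?_
  rw [rpow_sub_one hx]
  set x := Z - π
  field_simp
  ring

lemma eigen_of_mem_Ioo {β Z : ℝ} (hZ : Z ∈ Ioo (-π) π) (hs : sin Z ≠ 0) :
    DifferentiableAt ℝ (phi β) Z ∧
    Vc Z * phi β Z + Tc Z * deriv (phi β) Z = β * phi β Z := by
  have hV : Vc Z = -cos Z := if_pos (abs_le.mpr ⟨hZ.1.le, hZ.2.le⟩)
  have hT : Tc Z = sin Z / 2 := by rw [Tc, if_neg (not_le.mpr hZ.1), if_pos hZ.2.le]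
  rw [hV, hT]
  refine differentiableAt_and_eq_of_eventuallyEq (hasDerivAt_rpow_div_mul_sin_sq hs)
    (phi_eventuallyEq_of_mem_Ioo hZ) ?_
  ring

/-- For every `β ∈ ℝ`, `φ_β` is differentiable away from `{−π, 0, π}` and satisfies
`V φ_β + T φ_β′ = β φ_β` there. -/
theorem stmt5 (β Z : ℝ)
    (hZ : Z ∈ Iio (-π) ∪ Ioo (-π) 0 ∪ Ioo 0 π ∪ Ioi π) :
    DifferentiableAt ℝ (phi β) Z ∧
    Vc Z * phi β Z + Tc Z * deriv (phi β) Z = β * phi β Z := by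
  rcases hZ with ((hleft | hneg) | hpos) | hright
  · exact eigen_of_lt_neg_pi hleft
  · exact eigen_of_mem_Ioo ⟨hneg.1, hneg.2.trans pi_pos⟩
      (sin_neg_of_neg_of_neg_pi_lt hneg.2 hneg.1).ne
  · exact eigen_of_mem_Ioo ⟨(neg_neg_of_pos pi_pos).trans hpos.1, hpos.2⟩
      (sin_pos_of_pos_of_lt_pi hpos.1 hpos.2).ne'
  · exact eigen_of_pi_lt hright
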